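/- arXiv:2006.12960 — 2 statements merged into one kernel-verified Lean document; each statement's English description precedes it below -/
import Mathlib

section
/- Let P be a lattice polygon, σ = cone(P×{1}), S = σ^∨ ∩ (M⊕ℤ) with primitive generators a¹,…,aⁿ of σ, R* = (0,1), and for k ≥ 2 define span_ℤ K^{kR*}_{i,i+1} where K^{R}_{i,i+1} = {r ∈ S : ⟨a^i,r⟩ < ⟨a^i,R⟩ and ⟨a^{i+1},r⟩ < ⟨a^{i+1},R⟩}. Then span_ℤ K^{kR*}_{i,i+1} equals the full lattice M ⊕ ℤ when ℓ(d^i) < k, and equals span_ℤ( (M⊕ℤ) ∩ (a^i)^⊥ ∩ (a^{i+1})^⊥, R* ) when ℓ(d^i) ≥ k, where d^i is the edge of P between the vertices corresponding to a^i and a^{i+1}. -/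
/-!
Write the edge as `v (i+1) - v i = g • d` with `d` primitive, so `g = ℓ(dⁱ)`, and let
`u = (d^⊥, -⟨vⁱ, d^⊥⟩)` be the primitive generator of `(aⁱ)^⊥ ∩ (a^{i+1})^⊥`. On `M ⊕ ℤ` the
difference `⟨a^{i+1}, r⟩ - ⟨aⁱ, r⟩` is `g ⟨d, r⟩`, and its kernel is spanned by `u` and `R*`.
The supporting functional of the edge is a nonzero multiple of `d^⊥`, so `u` or `-u` lies in `S`,
and `R* ∈ K` because `k ≥ 2`. If `k ≤ g`, the two pairings of `r ∈ K` lie in `[0, k)` and differ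
by a multiple of `g`, so `⟨d, r⟩ = 0` and `K ⊆ span(u, R*)`. If `g < k`, a Bezout vector `w` with
`⟨d, w⟩ = 1` plus a large multiple of the supporting functional lifts to an element of `K` with
pairings `0` and `g`; it spans `M ⊕ ℤ` together with `u` and `R*`.
-/

/-- Pairing of `aʲ = (vʲ,1)` with `r = (c,m) ∈ M ⊕ ℤ`: `⟨aʲ,r⟩ = ⟨vʲ,c⟩ + m`. -/
def pairA {n : ℕ} (v : ZMod n → (Fin 2 → ℤ)) (j : ZMod n)
    (r : (Fin 2 → ℤ) × ℤ) : ℤ :=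
  (∑ t, v j t * r.1 t) + r.2

open Submodule

def rot90 (d : Fin 2 → ℤ) : Fin 2 → ℤ := ![-d 1, d 0]

lemma dotProduct_rot90_self (d : Fin 2 → ℤ) : d ⬝ᵥ rot90 d = 0 := by
  simp only [dotProduct, Fin.sum_univ_two, rot90, Matrix.cons_val_zero, Matrix.cons_val_one]
  ring

lemma exists_eq_smul_rot90_of_dotProduct_eq_zero {d w : Fin 2 → ℤ} (hd : IsCoprime (d 0) (d 1))
    (hw : d ⬝ᵥ w = 0) : ∃ s : ℤ, w = s • rot90 d := by
  obtain ⟨a, b, hab⟩ := hd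
  simp only [dotProduct, Fin.sum_univ_two] at hw
  refine ⟨w 1 * a - w 0 * b, funext fun t => ?_⟩
  fin_cases t
  · show w 0 = (w 1 * a - w 0 * b) * -d 1
    linear_combination (-w 0) * hab + a * hw
  · show w 1 = (w 1 * a - w 0 * b) * d 0
    linear_combination (-w 1) * hab + b * hw

lemma gcd_pos_of_ne_zero {e : Fin 2 → ℤ} (he : e ≠ 0) : 0 < Int.gcd (e 0) (e 1) := by
  rw [Int.gcd_pos_iff]
  by_contra! h
  exact he (funext fun t => by fin_cases t <;> simp [h.1, h.2])

lemma exists_isCoprime_smul_eq {e : Fin 2 → ℤ} (hg : 0 < Int.gcd (e 0) (e 1)) :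
    ∃ d : Fin 2 → ℤ, IsCoprime (d 0) (d 1) ∧ e = (Int.gcd (e 0) (e 1) : ℤ) • d := by
  refine ⟨![e 0 / Int.gcd (e 0) (e 1), e 1 / Int.gcd (e 0) (e 1)],
    Int.isCoprime_iff_gcd_eq_one.mpr (Int.gcd_div_gcd_div_gcd hg), funext fun t => ?_⟩
  fin_cases t
  · exact (Int.mul_ediv_cancel' (Int.gcd_dvd_left _ _)).symm
  · exact (Int.mul_ediv_cancel' (Int.gcd_dvd_right _ _)).symm

lemma exists_forall_nonneg_mul_add {ι : Type*} [Finite ι] {φ ψ : ι → ℤ} (hφ : ∀ j, 0 ≤ φ j)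
    (hψ : ∀ j, φ j = 0 → 0 ≤ ψ j) : ∃ N : ℤ, ∀ j, 0 ≤ N * φ j + ψ j := by
  obtain ⟨N, hN⟩ := (Set.finite_range fun j => -ψ j).bddAbove
  refine ⟨max N 0, fun j => ?_⟩
  have hψN : -ψ j ≤ N := hN ⟨j, rfl⟩
  rcases (hφ j).eq_or_lt with h | h
  · simpa [← h] using hψ j h.symm
  · nlinarith [le_max_left N 0, le_max_right N 0]

lemma ZMod.three_consecutive_ne {n : ℕ} (hn : 3 ≤ n) (i : ZMod n) :
    i + 1 ≠ i ∧ i + 2 ≠ i ∧ i + 2 ≠ i + 1 := by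
  have key : ∀ a b : ℕ, a < 3 → b < 3 → a ≠ b → i + a ≠ i + b := fun a b ha hb hab h => by
    have := (ZMod.natCast_eq_natCast_iff' a b n).mp (add_left_cancel h)
    rw [Nat.mod_eq_of_lt (by omega), Nat.mod_eq_of_lt (by omega)] at this
    exact hab this
  refine ⟨?_, ?_, ?_⟩
  · simpa using key 1 0 (by omega) (by omega) one_ne_zero
  · simpa using key 2 0 (by omega) (by omega) two_ne_zero
  · simpa using key 2 1 (by omega) (by omega) (by omega)

section Polygon

variable {n : ℕ} (v : ZMod n → Fin 2 → ℤ)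

abbrev rStar : (Fin 2 → ℤ) × ℤ := (0, 1)

/-- The paper's `K^{kR*}_{i,i+1}`; the condition `∀ j, 0 ≤ pairA v j r` is `r ∈ S`. -/
def cornerSet (i : ZMod n) (k : ℤ) : Set ((Fin 2 → ℤ) × ℤ) :=
  {r | (∀ j, 0 ≤ pairA v j r) ∧ pairA v i r < k ∧ pairA v (i + 1) r < k}

def perpLift (i : ZMod n) (w : Fin 2 → ℤ) : (Fin 2 → ℤ) × ℤ := (w, -(v i ⬝ᵥ w))

lemma pairA_eq (j : ZMod n) (r : (Fin 2 → ℤ) × ℤ) : pairA v j r = v j ⬝ᵥ r.1 + r.2 := rfl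

lemma pairA_rStar (j : ZMod n) : pairA v j rStar = 1 := by
  simp [pairA_eq]

lemma pairA_sub_pairA (i j : ZMod n) (r : (Fin 2 → ℤ) × ℤ) :
    pairA v j r - pairA v i r = (v j - v i) ⬝ᵥ r.1 := by
  simp only [pairA_eq, sub_dotProduct]
  ring

lemma pairA_perpLift (i j : ZMod n) (w : Fin 2 → ℤ) :
    pairA v j (perpLift v i w) = (v j - v i) ⬝ᵥ w := by
  simp only [pairA_eq, perpLift, sub_dotProduct]
  ring

lemma perpLift_smul (i : ZMod n) (s : ℤ) (w : Fin 2 → ℤ) :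
    perpLift v i (s • w) = s • perpLift v i w := by
  simp only [perpLift, dotProduct_smul, Prod.smul_mk, smul_eq_mul, mul_neg]

lemma perpLift_add_pairA_smul_rStar (i : ZMod n) (r : (Fin 2 → ℤ) × ℤ) :
    perpLift v i r.1 + pairA v i r • rStar = r := by
  ext t
  · simp [perpLift]
  · simp only [perpLift, pairA_eq, Prod.snd_add, Prod.smul_snd, smul_eq_mul, mul_one]
    ring

variable {i : ZMod n} {d : Fin 2 → ℤ}

lemma mem_span_perpLift_rot90_rStar (hd : IsCoprime (d 0) (d 1))
    {r : (Fin 2 → ℤ) × ℤ} (hr : d ⬝ᵥ r.1 = 0) : r ∈ span ℤ {perpLift v i (rot90 d), rStar} := by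
  obtain ⟨s, hs⟩ := exists_eq_smul_rot90_of_dotProduct_eq_zero hd hr
  rw [mem_span_pair]
  exact ⟨s, pairA v i r, by rw [← perpLift_smul, ← hs, perpLift_add_pairA_smul_rStar]⟩

lemma eq_top_of_dotProduct_eq_one (hd : IsCoprime (d 0) (d 1))
    {p : Submodule ℤ ((Fin 2 → ℤ) × ℤ)} (hu : perpLift v i (rot90 d) ∈ p) (hR : rStar ∈ p)
    {r₁ : (Fin 2 → ℤ) × ℤ} (hr₁ : r₁ ∈ p) (h₁ : d ⬝ᵥ r₁.1 = 1) : p = ⊤ := by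
  refine eq_top_iff'.2 fun r => ?_
  have hker : d ⬝ᵥ (r - (d ⬝ᵥ r.1) • r₁).1 = 0 := by
    rw [Prod.fst_sub, Prod.smul_fst, dotProduct_sub, dotProduct_smul, h₁, smul_eq_mul, mul_one,
      sub_self]
  have hspan : span ℤ {perpLift v i (rot90 d), rStar} ≤ p :=
    span_le.2 (Set.insert_subset hu (Set.singleton_subset_iff.2 hR))
  simpa using add_mem (hspan (mem_span_perpLift_rot90_rStar v hd hker)) (smul_mem p (d ⬝ᵥ r.1) hr₁)

variable {g : ℤ}

lemma pairA_succ_sub_pairA (he : v (i + 1) - v i = g • d) (r : (Fin 2 → ℤ) × ℤ) :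
    pairA v (i + 1) r - pairA v i r = g * d ⬝ᵥ r.1 := by
  rw [pairA_sub_pairA, he, smul_dotProduct, smul_eq_mul]

lemma span_perp_union_rStar (hd : IsCoprime (d 0) (d 1)) (hg : g ≠ 0)
    (he : v (i + 1) - v i = g • d) :
    span ℤ ({r | pairA v i r = 0 ∧ pairA v (i + 1) r = 0} ∪ {rStar})
      = span ℤ {perpLift v i (rot90 d), rStar} := by
  apply le_antisymm
  · refine span_le.2 (Set.union_subset (fun r ⟨hi, hi1⟩ => ?_) ?_)
    · refine mem_span_perpLift_rot90_rStar v hd ?_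
      have := pairA_succ_sub_pairA v he r
      rw [hi, hi1, sub_zero, eq_comm, mul_eq_zero] at this
      exact this.resolve_left hg
    · exact Set.singleton_subset_iff.2 (subset_span (by simp))
  · refine span_mono (Set.insert_subset (Or.inl ⟨?_, ?_⟩) (by simp))
    · rw [pairA_perpLift, sub_self, zero_dotProduct]
    · rw [pairA_perpLift, he, smul_dotProduct, dotProduct_rot90_self, smul_zero]

lemma rStar_mem_cornerSet {k : ℤ} (hk : 1 < k) : rStar ∈ cornerSet v i k := by
  simp only [cornerSet, Set.mem_ofPred_eq, pairA_rStar]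
  exact ⟨fun _ => zero_le_one, hk, hk⟩

lemma exists_ne_zero_eq_smul_rot90 (hd : IsCoprime (d 0) (d 1)) (hg : g ≠ 0)
    (he : v (i + 1) - v i = g • d) {c : Fin 2 → ℤ} (hc : v i ⬝ᵥ c = v (i + 1) ⬝ᵥ c) {j : ZMod n}
    (hj : v i ⬝ᵥ c < v j ⬝ᵥ c) : ∃ s : ℤ, s ≠ 0 ∧ c = s • rot90 d := by
  have hdc : d ⬝ᵥ c = 0 := by
    have h : (v (i + 1) - v i) ⬝ᵥ c = 0 := by rw [sub_dotProduct, hc, sub_self]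
    rw [he, smul_dotProduct, smul_eq_zero] at h
    exact h.resolve_left hg
  obtain ⟨s, rfl⟩ := exists_eq_smul_rot90_of_dotProduct_eq_zero hd hdc
  refine ⟨s, ?_, rfl⟩
  rintro rfl
  simp at hj

lemma perpLift_rot90_mem_span_cornerSet {k : ℤ} (hk : 0 < k) (he : v (i + 1) - v i = g • d)
    {s : ℤ} (hs : s ≠ 0) (hmin : ∀ j, v i ⬝ᵥ (s • rot90 d) ≤ v j ⬝ᵥ (s • rot90 d)) :
    perpLift v i (rot90 d) ∈ span ℤ (cornerSet v i k) := by
  have hmem : ∀ ε : ℤ, 0 < ε * s → ε • perpLift v i (rot90 d) ∈ cornerSet v i k := by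
    intro ε hε
    refine ⟨fun j => ?_, ?_, ?_⟩
    · have hj := hmin j
      rw [← sub_nonneg, ← sub_dotProduct, dotProduct_smul, smul_eq_mul] at hj
      rw [← perpLift_smul, pairA_perpLift, dotProduct_smul, smul_eq_mul]
      refine nonneg_of_mul_nonneg_right (a := ε * s) ?_ hε
      linear_combination mul_nonneg (mul_self_nonneg ε) hj
    · rwa [← perpLift_smul, pairA_perpLift, sub_self, zero_dotProduct]
    · rwa [← perpLift_smul, pairA_perpLift, he, smul_dotProduct, dotProduct_smul,
        dotProduct_rot90_self, smul_zero, smul_zero]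
  rcases hs.lt_or_gt with h | h
  · simpa using neg_mem (subset_span (hmem (-1) (by linarith)))
  · simpa using subset_span (hmem 1 (by linarith))

lemma dotProduct_eq_zero_of_mem_cornerSet {k : ℤ} (hk : k ≤ g) (he : v (i + 1) - v i = g • d)
    {r : (Fin 2 → ℤ) × ℤ} (hr : r ∈ cornerSet v i k) : d ⬝ᵥ r.1 = 0 := by
  obtain ⟨hS, hi, hi1⟩ := hr
  have hdiff := pairA_succ_sub_pairA v he r
  have := hS i
  have := hS (i + 1)
  by_contra hne
  rcases lt_or_gt_of_ne hne with h | h <;> nlinarith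

lemma span_cornerSet_eq_span_pair (hd : IsCoprime (d 0) (d 1)) {k : ℤ} (hk : k ≤ g)
    (he : v (i + 1) - v i = g • d) (hu : perpLift v i (rot90 d) ∈ span ℤ (cornerSet v i k))
    (hR : rStar ∈ cornerSet v i k) :
    span ℤ (cornerSet v i k) = span ℤ {perpLift v i (rot90 d), rStar} :=
  le_antisymm
    (span_le.2 fun _ hr =>
      mem_span_perpLift_rot90_rStar v hd (dotProduct_eq_zero_of_mem_cornerSet v hk he hr))
    (span_le.2 (Set.insert_subset hu (Set.singleton_subset_iff.2 (subset_span hR))))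

lemma exists_mem_cornerSet_dotProduct_eq_one [NeZero n] (hd : IsCoprime (d 0) (d 1))
    {k : ℤ} (hg : 0 ≤ g) (hgk : g < k) (he : v (i + 1) - v i = g • d) {c : Fin 2 → ℤ}
    (hdc : d ⬝ᵥ c = 0) (hmin : ∀ j, v i ⬝ᵥ c ≤ v j ⬝ᵥ c)
    (hstrict : ∀ j, j ≠ i → j ≠ i + 1 → v i ⬝ᵥ c < v j ⬝ᵥ c) :
    ∃ r ∈ cornerSet v i k, d ⬝ᵥ r.1 = 1 := by
  obtain ⟨a, b, hab⟩ := hd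
  set w : Fin 2 → ℤ := ![a, b]
  have hw : d ⬝ᵥ w = 1 := by
    simp only [w, dotProduct, Fin.sum_univ_two, Matrix.cons_val_zero, Matrix.cons_val_one]
    linarith
  have hedge : ∀ x : Fin 2 → ℤ, (v (i + 1) - v i) ⬝ᵥ x = g * d ⬝ᵥ x := fun x => by
    rw [he, smul_dotProduct, smul_eq_mul]
  -- `c` is positive off the edge and `w` takes the values `0` and `g` on it, so `N • c + w` is
  -- nonnegative at every vertex once `N` is large.
  have hψ : ∀ j, (v j - v i) ⬝ᵥ c = 0 → 0 ≤ (v j - v i) ⬝ᵥ w := by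
    intro j hj
    by_cases hji : j = i
    · simp [hji]
    by_cases hji1 : j = i + 1
    · rw [hji1, hedge, hw, mul_one]
      exact hg
    · have := hstrict j hji hji1
      rw [sub_dotProduct] at hj
      omega
  obtain ⟨N, hN⟩ :=
    exists_forall_nonneg_mul_add (fun j => by simpa [sub_dotProduct] using hmin j) hψ
  refine ⟨perpLift v i (N • c + w), ⟨fun j => ?_, ?_, ?_⟩, ?_⟩
  · rw [pairA_perpLift, dotProduct_add, dotProduct_smul, smul_eq_mul]
    exact hN j
  · rw [pairA_perpLift, sub_self, zero_dotProduct]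
    linarith
  · rwa [pairA_perpLift, dotProduct_add, dotProduct_smul, hedge, hedge, hdc, hw, mul_zero,
      smul_zero, zero_add, mul_one]
  · change d ⬝ᵥ (N • c + w) = 1
    rw [dotProduct_add, dotProduct_smul, hdc, hw, smul_zero, zero_add]

end Polygon

/-- eq. `eq spanzz`: for a lattice polygon with cyclically ordered
vertices `vʲ` (each edge `vʲv^{j+1}` supported by a functional that is minimal exactly
on its two endpoints), `S = σ^∨ ∩ (M⊕ℤ)`, `aʲ = (vʲ,1)`, `R* = (0,1)` and `k ≥ 2`:
the set `K^{kR*}_{i,i+1} = {r ∈ S : ⟨aⁱ,r⟩ < k, ⟨a^{i+1},r⟩ < k}` spans the full lattice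
`M ⊕ ℤ` when the lattice length `ℓ(dⁱ)` of the edge `dⁱ = v^{i+1} − vⁱ` satisfies
`ℓ(dⁱ) < k`, and spans `span_ℤ((M⊕ℤ) ∩ (aⁱ)^⊥ ∩ (a^{i+1})^⊥, R*)` when `ℓ(dⁱ) ≥ k`. -/
theorem stmt16 (n : ℕ) (hn : 3 ≤ n) (v : ZMod n → (Fin 2 → ℤ)) (k : ℕ) (hk : 2 ≤ k)
    (i : ZMod n)
    (hdistinct : ∀ j j' : ZMod n, j ≠ j' → v j ≠ v j')
    (hedge : ∀ j : ZMod n, ∃ c : Fin 2 → ℤ,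
      (∑ t, v j t * c t) = (∑ t, v (j + 1) t * c t)
      ∧ (∀ j', (∑ t, v j t * c t) ≤ ∑ t, v j' t * c t)
      ∧ (∀ j', j' ≠ j → j' ≠ j + 1 → (∑ t, v j t * c t) < ∑ t, v j' t * c t)) :
    (Int.gcd (v (i + 1) 0 - v i 0) (v (i + 1) 1 - v i 1) < k →
      Submodule.span ℤ
        {r : (Fin 2 → ℤ) × ℤ | (∀ j, 0 ≤ pairA v j r)
          ∧ pairA v i r < k ∧ pairA v (i + 1) r < k} = ⊤)
    ∧ (k ≤ Int.gcd (v (i + 1) 0 - v i 0) (v (i + 1) 1 - v i 1) →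
      Submodule.span ℤ
        {r : (Fin 2 → ℤ) × ℤ | (∀ j, 0 ≤ pairA v j r)
          ∧ pairA v i r < k ∧ pairA v (i + 1) r < k}
      = Submodule.span ℤ
        ({r : (Fin 2 → ℤ) × ℤ | pairA v i r = 0 ∧ pairA v (i + 1) r = 0}
          ∪ {((0 : Fin 2 → ℤ), (1 : ℤ))})) := by
  have : NeZero n := ⟨by omega⟩
  obtain ⟨hi1, hi2, hi21⟩ := ZMod.three_consecutive_ne hn i
  have hg := gcd_pos_of_ne_zero (sub_ne_zero.2 (hdistinct _ _ hi1))
  obtain ⟨d, hd, he⟩ := exists_isCoprime_smul_eq hg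
  simp only [Pi.sub_apply] at hg he
  obtain ⟨c, hc, hmin, hstrict⟩ := hedge i
  obtain ⟨s, hs, rfl⟩ :=
    exists_ne_zero_eq_smul_rot90 v hd (by positivity) he hc (hstrict (i + 2) hi2 hi21)
  have hdc : d ⬝ᵥ s • rot90 d = 0 := by rw [dotProduct_smul, dotProduct_rot90_self, smul_zero]
  have hu := perpLift_rot90_mem_span_cornerSet v (k := k) (by omega) he hs hmin
  have hR := rStar_mem_cornerSet v (i := i) (k := k) (by omega)
  refine ⟨fun hlt => ?_, fun hge => ?_⟩
  · obtain ⟨r₁, hr₁, h₁⟩ := exists_mem_cornerSet_dotProduct_eq_one v (k := k) hd (by positivity)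
      (by exact_mod_cast hlt) he hdc hmin hstrict
    exact eq_top_of_dotProduct_eq_one v hd hu (subset_span hR) (subset_span hr₁) h₁
  · exact (span_cornerSet_eq_span_pair v hd (by exact_mod_cast hge) he hu hR).trans
      (span_perp_union_rStar v hd (by positivity) he).symm
end

section
/- Let P be a lattice polygon with n edges of lattice lengths l₁,…,lₙ (edges cyclically ordered, edge vectors d¹,…,dⁿ summing to 0). For k ≥ 2 the dimension of the space V_k = {(t₁,…,tₙ,s) ∈ ℝ^{n+1} : Σᵢ tᵢ dⁱ = 0, and tᵢ = s whenever lᵢ ≤ k−1} satisfies dim V_k − 1 = max(0, #{i : lᵢ ≥ k} − 2) provided the edges {dⁱ : lᵢ ≥ k} span ℝ² whenever there are at least two linearly independent such edges; in particular if no two edges of length ≥ k are parallel and at least two exist, dim T¹ in degree −kR* equals #{i : lᵢ ≥ k} − 2. -/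
open Finset Module LinearMap

/-! The closing condition `∑ tᵢ dⁱ = 0` is invariant under `tᵢ ↦ tᵢ - s` because `∑ dⁱ = 0`;
after this shift the short coordinates vanish, so `V_k` splits as the line of the scale `s`
times the space of relations `∑_{lᵢ ≥ k} uᵢ dⁱ = 0` among the long edges. By rank–nullity that
relation space has dimension `#{i : lᵢ ≥ k} - 2` when the long edges span the plane, and it is
zero when there is at most one long edge, since edges are nonzero. -/

section

variable {ι K M : Type*} [Fintype ι] [Field K] [AddCommGroup M] [Module K M]

theorem finrank_ker_linearCombination_add_finrank_span (v : ι → M) :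
    finrank K (ker (Fintype.linearCombination K v)) + finrank K (Submodule.span K (Set.range v))
      = Fintype.card ι := by
  rw [← Fintype.range_linearCombination, add_comm, finrank_range_add_finrank_ker,
    finrank_fintype_fun_eq_card]

theorem finrank_ker_linearCombination_of_subsingleton [Subsingleton ι] {v : ι → M}
    (hv : ∀ i, v i ≠ 0) : finrank K (ker (Fintype.linearCombination K v)) = 0 := by
  have hli : LinearIndependent K v := (linearIndependent_subsingleton_index_iff v).2 hv
  have := finrank_ker_linearCombination_add_finrank_span (K := K) v
  rw [finrank_span_eq_card hli] at this
  omega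

variable (K) in
/-- The space `V_k`, with `S` the set of long edges `{i | k ≤ lᵢ}`. -/
def edgeScalingSpace (d : ι → M) (S : Finset ι) : Submodule K ((ι → K) × K) where
  carrier := {p | ∑ i, p.1 i • d i = 0 ∧ ∀ i ∉ S, p.1 i = p.2}
  add_mem' := by
    rintro p q ⟨hp, hp'⟩ ⟨hq, hq'⟩
    refine ⟨?_, fun i hi => ?_⟩
    · simp [add_smul, sum_add_distrib, hp, hq]
    · simp [hp' i hi, hq' i hi]
  zero_mem' := by simp
  smul_mem' := by
    rintro c p ⟨hp, hp'⟩
    refine ⟨?_, fun i hi => ?_⟩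
    · simp [mul_smul, ← smul_sum, hp]
    · simp [hp' i hi]

theorem mem_edgeScalingSpace {d : ι → M} {S : Finset ι} {p : (ι → K) × K} :
    p ∈ edgeScalingSpace K d S ↔ ∑ i, p.1 i • d i = 0 ∧ ∀ i ∉ S, p.1 i = p.2 :=
  Iff.rfl

variable {d : ι → M} {S : Finset ι}

theorem sum_smul_eq_sum_coe_sort_sub_smul (hd : ∑ i, d i = 0) {t : ι → K} {s : K}
    (ht : ∀ i ∉ S, t i = s) : ∑ i, t i • d i = ∑ i : S, (t i - s) • d i := by
  calc ∑ i, t i • d i = ∑ i, (t i - s) • d i := by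
        simp [sub_smul, sum_sub_distrib, ← smul_sum, hd]
    _ = ∑ i ∈ S, (t i - s) • d i :=
        (sum_subset (subset_univ S) fun i _ hi => by simp [ht i hi]).symm
    _ = ∑ i : S, (t i - s) • d i := (sum_coe_sort S _).symm

theorem mem_edgeScalingSpace_iff_of_sum_eq_zero (hd : ∑ i, d i = 0) {p : (ι → K) × K} :
    p ∈ edgeScalingSpace K d S ↔ (fun i : S => p.1 i - p.2) ∈
      ker (Fintype.linearCombination K (fun i : S => d i)) ∧ ∀ i ∉ S, p.1 i = p.2 := by
  rw [mem_edgeScalingSpace, mem_ker, Fintype.linearCombination_apply]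
  exact ⟨fun ⟨h, hS⟩ => ⟨sum_smul_eq_sum_coe_sort_sub_smul hd hS ▸ h, hS⟩,
    fun ⟨h, hS⟩ => ⟨sum_smul_eq_sum_coe_sort_sub_smul hd hS ▸ h, hS⟩⟩

def edgeScalingSpaceEquiv [DecidableEq ι] (hd : ∑ i, d i = 0) :
    edgeScalingSpace K d S ≃ₗ[K] ker (Fintype.linearCombination K (fun i : S => d i)) × K where
  toFun p :=
    (⟨fun i : S => p.1.1 i - p.1.2, ((mem_edgeScalingSpace_iff_of_sum_eq_zero hd).1 p.2).1⟩,
      p.1.2)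
  invFun q := ⟨(fun j => if h : j ∈ S then q.1.1 ⟨j, h⟩ + q.2 else q.2, q.2), by
    refine (mem_edgeScalingSpace_iff_of_sum_eq_zero hd).2 ⟨?_, fun i hi => by simp [hi]⟩
    simp⟩
  left_inv := by
    rintro ⟨p, hp⟩
    ext j
    · by_cases hj : j ∈ S
      · simp [hj]
      · simp [hj, ((mem_edgeScalingSpace_iff_of_sum_eq_zero hd).1 hp).2 j hj]
    · rfl
  right_inv := by
    rintro ⟨⟨u, hu⟩, s⟩
    ext i <;> simp
  map_add' p q := by
    ext i <;> simp; ring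
  map_smul' c p := by
    ext i <;> simp; ring

theorem finrank_edgeScalingSpace (hd : ∑ i, d i = 0) :
    finrank K (edgeScalingSpace K d S)
      = finrank K (ker (Fintype.linearCombination K (fun i : S => d i))) + 1 := by
  classical
  rw [(edgeScalingSpaceEquiv hd).finrank_eq, finrank_prod, finrank_self]

end

open scoped Classical in
theorem stmt18 {n : ℕ} (k : ℕ) (hk : 2 ≤ k)
    (d : Fin n → (Fin 2 → ℝ)) (l : Fin n → ℕ)
    (hd0 : ∀ i, d i ≠ 0)
    (hclosed : ∀ t, ∑ i, d i t = 0)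
    (hspan : 2 ≤ (univ.filter (fun i => k ≤ l i)).card →
      Submodule.span ℝ {x : Fin 2 → ℝ | ∃ i, k ≤ l i ∧ x = d i} = ⊤)
    (V : Submodule ℝ ((Fin n → ℝ) × ℝ))
    (hV : ∀ p : (Fin n → ℝ) × ℝ, p ∈ V ↔
      ((∀ t, ∑ i, p.1 i * d i t = 0) ∧ ∀ i, l i ≤ k - 1 → p.1 i = p.2)) :
    Module.finrank ℝ V - 1 = max 0 ((univ.filter (fun i => k ≤ l i)).card - 2) := by
  set S := univ.filter (fun i => k ≤ l i)
  have hV_eq : V = edgeScalingSpace ℝ d S := by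
    ext p
    have hshort : ∀ i, l i ≤ k - 1 ↔ i ∉ S := fun i => by simp [S]; omega
    simp only [hV, mem_edgeScalingSpace, hshort, funext_iff, Finset.sum_apply, Pi.smul_apply,
      smul_eq_mul, Pi.zero_apply]
  have hd : ∑ i, d i = 0 := funext fun t => by simpa using hclosed t
  rw [hV_eq, finrank_edgeScalingSpace hd, Nat.add_sub_cancel, Nat.zero_max]
  rcases le_or_gt 2 S.card with hS | hS
  · have hrank := finrank_ker_linearCombination_add_finrank_span (K := ℝ) (fun i : S => d i)
    have hrange : Set.range (fun i : S => d i) = {x | ∃ i, k ≤ l i ∧ x = d i} := by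
      ext x; simp [S, eq_comm]
    rw [hrange, hspan hS, finrank_top, finrank_fin_fun, Fintype.card_coe] at hrank
    omega
  · have : Subsingleton S := Finset.card_le_one_iff_subsingleton_coe.1 (by omega)
    rw [finrank_ker_linearCombination_of_subsingleton (v := fun i : S => d i) fun i => hd0 i]
    omega
end
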